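/- Let R be a PvMD and J = x₁R + ⋯ + xₙR a nonzero finitely generated ideal of R such that J_v ≠ R. If P is a t-prime ideal of R containing J, then the following are equivalent: (1) P is a minimal prime of J_v; (2) P is a minimal prime of J; (3) P is a minimal prime of x_iR for some i with 1 ≤ i ≤ n. -/

import Mathlib

/-! Definitions following El Baghdadi–Gabelli, "Ring-theoretic properties of PvMDs".
`A` is an integral domain with quotient field `K`; all star-operation notions are
defined for an algebra `A → K` (instantiated with `K = FractionRing A`). -/

namespace Paper

section NoField

variable (A : Type*) [CommRing A]

/-- Finite character: every nonzero nonunit lies in only finitely many maximal ideals. -/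
def FiniteCharacter : Prop :=
  ∀ x : A, x ≠ 0 → ¬ IsUnit x → {M : Ideal A | M.IsMaximal ∧ x ∈ M}.Finite

/-- Ascending chain condition on radical ideals. -/
def ACCRadical : Prop :=
  ∀ f : ℕ →o Ideal A, (∀ n, (f n).IsRadical) → ∃ n, ∀ m, n ≤ m → f m = f n

/-- `P` is a branched prime: there is a `P`-primary ideal different from `P`. -/
def IsBranched (P : Ideal A) : Prop :=
  P.IsPrime ∧ P ≠ ⊥ ∧ ∃ Q : Ideal A, Q.IsPrimary ∧ Q.radical = P ∧ Q ≠ P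

/-- `P` is a height-one prime of the domain `A`. -/
def HeightOne (P : Ideal A) : Prop :=
  P.IsPrime ∧ P ≠ ⊥ ∧ ∀ Q : Ideal A, Q.IsPrime → Q < P → Q = ⊥

end NoField

section Generic

variable (A : Type*) (K : Type*) [CommRing A] [CommRing K] [Algebra A K]

/-- The image of an ideal `I` of `A` in `K`, as an `A`-submodule of `K`. -/
def sub (I : Ideal A) : Submodule A K := Submodule.map (Algebra.linearMap A K) I

/-- The dual `(A : E) = {x ∈ K : xE ⊆ A}` of an `A`-submodule `E` of `K`. -/
def dual (E : Submodule A K) : Submodule A K := 1 / E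

/-- The `v`-operation `E ↦ (A : (A : E))` on submodules of `K`. -/
def vop (E : Submodule A K) : Submodule A K := dual A K (dual A K E)

/-- The `v`-closure `I_v` of an ideal `I` of `A`, as an ideal of `A`. -/
def vcl (I : Ideal A) : Ideal A := (vop A K (sub A K I)).comap (Algebra.linearMap A K)

/-- The `t`-closure `I_t = ⋃ J_v`, `J` ranging over the nonzero finitely generated
subideals of `I`. -/
def tcl (I : Ideal A) : Ideal A :=
  ⨆ J : {J : Ideal A // J.FG ∧ J ≠ ⊥ ∧ J ≤ I}, vcl A K J.1

/-- A (nonzero) `t`-ideal. -/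
def IsTIdeal (I : Ideal A) : Prop := I ≠ ⊥ ∧ tcl A K I = I

/-- A prime `t`-ideal. -/
def IsTPrime (P : Ideal A) : Prop := P.IsPrime ∧ IsTIdeal A K P

/-- A `t`-maximal ideal: maximal among proper `t`-ideals. -/
def IsTMax (M : Ideal A) : Prop :=
  IsTIdeal A K M ∧ M ≠ ⊤ ∧ ∀ J : Ideal A, IsTIdeal A K J → J ≠ ⊤ → M ≤ J → J = M

/-- The localization `A_P ⊆ K` of `A` at (the complement of) a prime `P`, as a subset of `K`. -/
def locSet (P : Ideal A) : Set K :=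
  {x | ∃ a s : A, s ∉ P ∧ algebraMap A K s * x = algebraMap A K a}

/-- The trace ideal `I(A:I)`, as an ideal of `A`. -/
def traceIdeal (I : Ideal A) : Ideal A :=
  (sub A K I * dual A K (sub A K I)).comap (Algebra.linearMap A K)

/-- `I` is `t`-invertible: `(I(A:I))_t = A`. -/
def IsTInvertible (I : Ideal A) : Prop := tcl A K (traceIdeal A K I) = ⊤

/-- The `t`-radical trace property: for every nonzero ideal `I`, `(I(A:I))_t` is `A`
or a radical ideal. -/
def IsTRTP : Prop :=
  ∀ I : Ideal A, I ≠ ⊥ →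
    tcl A K (traceIdeal A K I) = ⊤ ∨ (tcl A K (traceIdeal A K I)).IsRadical

/-- The radical trace property: for every nonzero ideal `I`, `I(A:I)` is `A`
or a radical ideal. -/
def IsRTP : Prop :=
  ∀ I : Ideal A, I ≠ ⊥ → traceIdeal A K I = ⊤ ∨ (traceIdeal A K I).IsRadical

/-- The `t#`-property. -/
def IsTSharp : Prop :=
  ∀ M₁ M₂ : Set (Ideal A), M₁ ⊆ {M | IsTMax A K M} → M₂ ⊆ {M | IsTMax A K M} →
    M₁ ≠ M₂ → (⋂ M ∈ M₁, locSet A K M) ≠ (⋂ M ∈ M₂, locSet A K M)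

/-- The `t##`-property. -/
def IsTSharpSharp : Prop :=
  ∀ P₁ P₂ : Set (Ideal A), P₁ ⊆ {P | IsTPrime A K P} → P₂ ⊆ {P | IsTPrime A K P} →
    (∀ P ∈ P₁, ∀ Q ∈ P₁, P ≤ Q → P = Q) → (∀ P ∈ P₂, ∀ Q ∈ P₂, P ≤ Q → P = Q) →
    P₁ ≠ P₂ → (⋂ P ∈ P₁, locSet A K P) ≠ (⋂ P ∈ P₂, locSet A K P)

/-- The `#`-property. -/
def IsSharp : Prop :=
  ∀ M₁ M₂ : Set (Ideal A), M₁.Nonempty → M₂.Nonempty →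
    M₁ ⊆ {M | M.IsMaximal} → M₂ ⊆ {M | M.IsMaximal} →
    M₁ ≠ M₂ → (⋂ M ∈ M₁, locSet A K M) ≠ (⋂ M ∈ M₂, locSet A K M)

/-- Ascending chain condition on radical `t`-ideals. -/
def ACCRadicalT : Prop :=
  ∀ f : ℕ →o Ideal A, (∀ n, IsTIdeal A K (f n) ∧ (f n).IsRadical) →
    ∃ n, ∀ m, n ≤ m → f m = f n

/-- Ascending chain condition on prime `t`-ideals. -/
def ACCPrimeT : Prop :=
  ∀ f : ℕ →o Ideal A, (∀ n, IsTPrime A K (f n)) → ∃ n, ∀ m, n ≤ m → f m = f n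

/-- `t`-finite character: every nonzero nonunit lies in only finitely many
`t`-maximal ideals. -/
def TFiniteCharacter : Prop :=
  ∀ x : A, x ≠ 0 → ¬ IsUnit x → {M : Ideal A | IsTMax A K M ∧ x ∈ M}.Finite

/-- Weakly Matlis: `t`-finite character and every `t`-prime is contained in a unique
`t`-maximal ideal. -/
def IsWeaklyMatlis : Prop :=
  TFiniteCharacter A K ∧ ∀ P : Ideal A, IsTPrime A K P → ∃! M : Ideal A, IsTMax A K M ∧ P ≤ M

/-- h-local: finite character and every nonzero prime is contained in a unique
maximal ideal. -/
def IsHLocal : Prop :=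
  FiniteCharacter A ∧
    ∀ P : Ideal A, P.IsPrime → P ≠ ⊥ → ∃! M : Ideal A, M.IsMaximal ∧ P ≤ M

/-- Prüfer domain: every nonzero finitely generated ideal is invertible. -/
def IsPruferD : Prop :=
  ∀ I : Ideal A, I ≠ ⊥ → I.FG → sub A K I * dual A K (sub A K I) = 1

/-- Strongly discrete Prüfer domain: `P ≠ P²` for all nonzero primes. -/
def IsSDPrufer : Prop :=
  IsPruferD A K ∧ ∀ P : Ideal A, P.IsPrime → P ≠ ⊥ → P * P ≠ P

/-- Generalized Dedekind domain. -/
def IsGenDedekind : Prop := IsSDPrufer A K ∧ ACCRadical A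

/-- Divisorial domain: every nonzero ideal is divisorial. -/
def IsDivisorialDomain : Prop := ∀ I : Ideal A, I ≠ ⊥ → vcl A K I = I

/-- Stable domain: every nonzero ideal `J` satisfies `J((J:J):J) = (J:J)`. -/
def IsStableDomain : Prop :=
  ∀ J : Ideal A, J ≠ ⊥ →
    sub A K J * ((sub A K J / sub A K J) / sub A K J) = sub A K J / sub A K J

/-- The `w`-operation (as a semistar operation): `E_w = ⋂_{M ∈ t-Max(A)} E A_M`,
computed as a subset of `K`. -/
def wSet (E : Submodule A K) : Set K :=
  ⋂ M ∈ {M : Ideal A | IsTMax A K M}, {x : K | ∃ s : A, s ∉ M ∧ s • x ∈ E}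

/-- A (nonzero) `w`-ideal: `I = I_w`. -/
def IsWIdeal (I : Ideal A) : Prop := I ≠ ⊥ ∧ wSet A K (sub A K I) = (sub A K I : Set K)

/-- The endomorphism ring `E(I) = (I : I)`, as a submodule of `K`. -/
def eRing (I : Ideal A) : Submodule A K := sub A K I / sub A K I

/-- `I` is a `w`-stable ideal: `(I(E(I):I))_w = E(I)`. -/
def IsWStableIdeal (I : Ideal A) : Prop :=
  wSet A K (sub A K I * (eRing A K I / sub A K I)) = (eRing A K I : Set K)

/-- `A` is `w`-stable: every `w`-ideal is `w`-stable. -/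
def IsWStable : Prop := ∀ I : Ideal A, IsWIdeal A K I → IsWStableIdeal A K I

/-- `A` is `w`-divisorial: `I_w = I_v` for every nonzero ideal. -/
def IsWDivisorial : Prop :=
  ∀ I : Ideal A, I ≠ ⊥ → wSet A K (sub A K I) = ((vop A K (sub A K I) : Submodule A K) : Set K)

/-- The endomorphism ring `E(I) = (I : I)` as a subalgebra of `K`. -/
def eSubalgebra (I : Ideal A) : Subalgebra A K where
  carrier := {x : K | ∀ y ∈ sub A K I, x * y ∈ sub A K I}
  mul_mem' := by
    intro a b ha hb y hy
    rw [mul_assoc]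
    exact ha _ (hb _ hy)
  one_mem' := by
    intro y hy
    rw [one_mul]; exact hy
  add_mem' := by
    intro a b ha hb y hy
    rw [add_mul]
    exact Submodule.add_mem _ (ha _ hy) (hb _ hy)
  zero_mem' := by
    intro y hy
    rw [zero_mul]
    exact Submodule.zero_mem _
  algebraMap_mem' := by
    intro r y hy
    rw [← Algebra.smul_def]
    exact Submodule.smul_mem _ r hy

end Generic

section Domain

variable (R : Type*) [CommRing R] [IsDomain R]

/-- A Prüfer `v`-multiplication domain: the localization at every `t`-maximal ideal
is a valuation domain. -/
def IsPvMD : Prop :=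
  ∀ M : Ideal R, IsTMax R (FractionRing R) M →
    ∃ _ : M.IsPrime, ValuationRing (Localization.AtPrime M)

/-- A strongly discrete PvMD: `(P²)_t ≠ P` for every `t`-prime `P`. -/
def IsSDPvMD : Prop :=
  IsPvMD R ∧ ∀ P : Ideal R, IsTPrime R (FractionRing R) P →
    tcl R (FractionRing R) (P * P) ≠ P

/-- A generalized Krull domain: a strongly discrete PvMD with ACC on radical
`t`-ideals. -/
def IsGenKrull : Prop := IsSDPvMD R ∧ ACCRadicalT R (FractionRing R)

/-- An almost Krull domain: the localization at every `t`-maximal ideal is a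
rank-one discrete valuation ring. -/
def IsAlmostKrull : Prop :=
  ∀ M : Ideal R, IsTMax R (FractionRing R) M →
    ∃ _ : M.IsPrime, IsDiscreteValuationRing (Localization.AtPrime M)

/-- A Krull domain: `R = ⋂ R_P` over the height-one primes, each such localization
is a DVR, and every nonzero element lies in only finitely many height-one primes. -/
def IsKrull : Prop :=
  (((1 : Submodule R (FractionRing R)) : Set (FractionRing R)) =
      ⋂ P ∈ {P : Ideal R | HeightOne R P}, locSet R (FractionRing R) P) ∧
    (∀ P : Ideal R, HeightOne R P →
      ∃ _ : P.IsPrime, IsDiscreteValuationRing (Localization.AtPrime P)) ∧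
    ∀ x : R, x ≠ 0 → {P : Ideal R | HeightOne R P ∧ x ∈ P}.Finite

end Domain


section CommRingNagata

variable (R : Type*) [CommRing R]

/-- The multiplicative set `N_t = {f ∈ R[X] : (c(f))_t = R}` (it is multiplicatively
closed, so taking the closure does not change it). -/
noncomputable def NtMonoid : Submonoid (Polynomial R) :=
  Submonoid.closure
    {f : Polynomial R | tcl R (FractionRing R) (Ideal.span (Set.range f.coeff)) = ⊤}

/-- The `t`-Nagata ring `R⟨X⟩ = R[X]_{N_t}`. -/
def tNagata : Type _ := Localization (NtMonoid R)

noncomputable instance : CommRing (tNagata R) :=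
  inferInstanceAs (CommRing (Localization (NtMonoid R)))

/-- The `##`-property: every overring is a `#`-domain. -/
def IsSharpSharp : Prop :=
  ∀ T : Subalgebra R (FractionRing R), IsSharp ↥T (FractionRing R)


end CommRingNagata

end Paper


/-!
Choose a `t`-maximal ideal `M ⊇ P`. As `R_M` is a valuation ring, one generator `x i` of `J`
generates `J R_M`, so some `s ∉ M` satisfies `s J ⊆ x i R`; then `s / x i ∈ (R : J)`, whence
also `s J_v ⊆ x i R`. In the chain `x i R ⊆ J ⊆ J_v` the largest ideal is multiplied into the
smallest by `s ∉ P`, so a prime contained in `P` contains one of the three ideals iff it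
contains all of them, and the three sets of minimal primes agree at `P`.
-/

namespace Paper

variable (R : Type*) [CommRing R] [IsDomain R]

local notation "KK" => FractionRing R

theorem _root_.Ideal.colon_mul_le {A : Type*} [CommRing A] (I J : Ideal A) :
    I.colon (J : Set A) * J ≤ I :=
  Ideal.mul_le.mpr fun _ hr _ ht ↦ Submodule.mem_colon.mp hr _ ht

theorem _root_.Ideal.mem_minimalPrimes_of_le_of_le {A : Type*} [CommRing A] {I I' P : Ideal A}
    (hII' : I ≤ I') (hP : P ∈ I.minimalPrimes) (hI'P : I' ≤ P) : P ∈ I'.minimalPrimes :=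
  ⟨⟨hP.1.1, hI'P⟩, fun _ hQ hQP ↦ hP.2 ⟨hQ.1, hII'.trans hQ.2⟩ hQP⟩

theorem _root_.Ideal.mem_minimalPrimes_iff_of_mul_le {A : Type*} [CommRing A]
    {I I' c P : Ideal A} (hII' : I ≤ I') (hc : c * I' ≤ I) (hcP : ¬ c ≤ P) :
    P ∈ I.minimalPrimes ↔ P ∈ I'.minimalPrimes := by
  have hle : ∀ Q : Ideal A, Q.IsPrime → Q ≤ P → (I ≤ Q ↔ I' ≤ Q) := fun Q hQ hQP ↦
    ⟨fun hIQ ↦ (hQ.mul_le.mp (hc.trans hIQ)).resolve_left fun hcQ ↦ hcP (hcQ.trans hQP),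
      hII'.trans⟩
  constructor
  · rintro ⟨⟨hP, hIP⟩, hmin⟩
    exact ⟨⟨hP, (hle P hP le_rfl).1 hIP⟩,
      fun Q hQ hQP ↦ hmin ⟨hQ.1, (hle Q hQ.1 hQP).2 hQ.2⟩ hQP⟩
  · rintro ⟨⟨hP, hI'P⟩, hmin⟩
    exact ⟨⟨hP, (hle P hP le_rfl).2 hI'P⟩,
      fun Q hQ hQP ↦ hmin ⟨hQ.1, (hle Q hQ.1 hQP).1 hQ.2⟩ hQP⟩

theorem _root_.Ideal.exists_not_colon_le_of_preValuationRing {A ι : Type*} [CommRing A]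
    [Finite ι] [Nonempty ι] (M : Ideal A) [hM : M.IsPrime]
    [PreValuationRing (Localization.AtPrime M)] (x : ι → A) :
    ∃ i, ¬ (Ideal.span {x i}).colon (Set.range x) ≤ M := by
  classical
  have := Fintype.ofFinite ι
  let Aₘ := Localization.AtPrime M
  obtain ⟨i, hi⟩ := Finite.exists_max fun j ↦ (Ideal.span {x j}).map (algebraMap A Aₘ)
  refine ⟨i, fun hle ↦ ?_⟩
  rw [← Set.iUnion_singleton_eq_range, Submodule.colon_iUnion, ← Finset.inf_univ_eq_iInf,
    hM.inf_le'] at hle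
  obtain ⟨j, -, hj⟩ := hle
  have hxj : algebraMap A Aₘ (x j) ∈ (Ideal.span {x i}).map (algebraMap A Aₘ) :=
    hi j (Ideal.mem_map_of_mem _ (Ideal.mem_span_singleton_self _))
  obtain ⟨m, hmM, hm⟩ :=
    (IsLocalization.algebraMap_mem_map_algebraMap_iff M.primeCompl _ _ _).mp hxj
  exact hmM (hj (Submodule.mem_colon_singleton.mpr hm))

section TOperation

variable {A K : Type*} [CommRing A] [CommRing K] [Algebra A K]

theorem le_vcl (I : Ideal A) : I ≤ vcl A K I := by
  intro z hz
  simp only [vcl, vop, dual, Submodule.mem_comap, Submodule.mem_div_iff_forall_mul_mem]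
  intro y hy
  rw [mul_comm]
  exact hy _ ⟨z, hz, rfl⟩

theorem vcl_le_tcl {I J : Ideal A} (hfg : J.FG) (hne : J ≠ ⊥) (hle : J ≤ I) :
    vcl A K J ≤ tcl A K I :=
  le_iSup (fun J : {J : Ideal A // J.FG ∧ J ≠ ⊥ ∧ J ≤ I} ↦ vcl A K J.1) ⟨J, hfg, hne, hle⟩

theorem le_tcl (I : Ideal A) : I ≤ tcl A K I := by
  intro z hz
  by_cases hz0 : z = 0
  · simp [hz0]
  · exact vcl_le_tcl (Submodule.fg_span_singleton z) (by simpa using hz0)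
      (Ideal.span_singleton_le_iff_mem _ |>.mpr hz) (le_vcl _ (Ideal.mem_span_singleton_self z))

theorem tcl_sSup_eq {c : Set (Ideal A)} (hne : c.Nonempty) (hdir : DirectedOn (· ≤ ·) c)
    (ht : ∀ I ∈ c, tcl A K I = I) : tcl A K (sSup c) = sSup c := by
  refine le_antisymm (iSup_le fun ⟨J, hfg, hJ0, hJc⟩ ↦ ?_) (le_tcl _)
  obtain ⟨I, hIc, hJI⟩ := (CompleteLattice.isCompactElement_iff_le_of_directed_sSup_le _ J).mp
    ((Submodule.fg_iff_compact J).mp hfg) c hne hdir hJc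
  calc vcl A K J ≤ tcl A K I := vcl_le_tcl hfg hJ0 hJI
    _ = I := ht I hIc
    _ ≤ sSup c := le_sSup hIc

theorem exists_isTMax_le {P : Ideal A} (hP : IsTIdeal A K P) (hPtop : P ≠ ⊤) :
    ∃ M, IsTMax A K M ∧ P ≤ M := by
  let S := {I : Ideal A | tcl A K I = I ∧ I ≠ ⊤}
  have hchain : ∀ c ⊆ S, IsChain (· ≤ ·) c → ∀ I ∈ c, ∃ ub ∈ S, ∀ J ∈ c, J ≤ ub := by
    intro c hcS hc I hI
    refine ⟨sSup c, ⟨tcl_sSup_eq ⟨I, hI⟩ hc.directedOn fun J hJ ↦ (hcS hJ).1, fun htop ↦ ?_⟩,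
      fun _ ↦ le_sSup⟩
    obtain ⟨J, hJc, hJ1⟩ := (Submodule.mem_sSup_of_directed ⟨I, hI⟩ hc.directedOn).mp
      (htop ▸ Submodule.mem_top : (1 : A) ∈ sSup c)
    exact (hcS hJc).2 ((Ideal.eq_top_iff_one J).mpr hJ1)
  obtain ⟨M, hPM, hMS, hMmax⟩ := zorn_le_nonempty₀ S hchain P ⟨hP.2, hPtop⟩
  exact ⟨M, ⟨⟨ne_bot_of_le_ne_bot hP.1 hPM, hMS.1⟩, hMS.2,
    fun J hJ hJtop hMJ ↦ le_antisymm (hMmax ⟨hJ.2, hJtop⟩ hMJ) hMJ⟩, hPM⟩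

end TOperation

theorem colon_mul_vcl_le {A K : Type*} [CommRing A] [Field K] [Algebra A K] [IsFractionRing A K]
    {a : A} (ha : a ≠ 0) (J : Ideal A) :
    (Ideal.span {a}).colon (J : Set A) * vcl A K J ≤ Ideal.span {a} := by
  have ha' : algebraMap A K a ≠ 0 := (map_ne_zero_iff _ (IsFractionRing.injective A K)).mpr ha
  refine Ideal.mul_le.mpr fun s hs z hz ↦ ?_
  have hdual : algebraMap A K s / algebraMap A K a ∈ dual A K (sub A K J) := by
    refine Submodule.mem_div_iff_forall_mul_mem.mpr ?_
    rintro _ ⟨t, ht, rfl⟩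
    obtain ⟨r, hr⟩ := Ideal.mem_span_singleton'.mp (Submodule.mem_colon.mp hs t ht)
    refine Submodule.mem_one.mpr ⟨r, ?_⟩
    rw [smul_eq_mul] at hr
    rw [Algebra.linearMap_apply, div_mul_eq_mul_div, eq_div_iff ha', ← map_mul, ← map_mul, hr]
  obtain ⟨r, hr⟩ := Submodule.mem_one.mp (Submodule.mem_div_iff_forall_mul_mem.mp hz _ hdual)
  refine Ideal.mem_span_singleton'.mpr ⟨r, IsFractionRing.injective A K ?_⟩
  rw [map_mul, map_mul, hr, Algebra.linearMap_apply]
  field_simp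

theorem IsPvMD.exists_not_colon_le (hR : IsPvMD R) {P : Ideal R} (hP : IsTPrime R KK P)
    {ι : Type*} [Finite ι] (x : ι → R) (hx : Ideal.span (Set.range x) ≠ ⊥) :
    ∃ i, x i ≠ 0 ∧ ¬ (Ideal.span {x i}).colon (Ideal.span (Set.range x) : Set R) ≤ P := by
  obtain ⟨M, hM, hPM⟩ := exists_isTMax_le hP.2 hP.1.ne_top
  obtain ⟨_, _⟩ := hR M hM
  have : Nonempty ι := by
    by_contra hι
    simp [not_nonempty_iff.mp hι] at hx
  obtain ⟨i, hi⟩ := Ideal.exists_not_colon_le_of_preValuationRing M x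
  rw [← Submodule.colon_span] at hi
  refine ⟨i, fun hxi ↦ hi ?_, fun hle ↦ hi (hle.trans hPM)⟩
  have hmul := Ideal.colon_mul_le (Ideal.span {x i}) (Ideal.span (Set.range x))
  rw [hxi, Ideal.span_singleton_eq_bot.mpr rfl] at hmul ⊢
  rw [le_bot_iff, Ideal.mul_eq_bot] at hmul
  exact (hmul.resolve_right hx).le.trans bot_le

theorem stmt_0 (hR : IsPvMD R)
    (n : ℕ) (x : Fin n → R) (J : Ideal R)
    (hJ : J = Ideal.span (Set.range x)) (hJ0 : J ≠ ⊥)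
    (P : Ideal R) (hP : IsTPrime R KK P) (hJP : J ≤ P) :
    (P ∈ (vcl R KK J).minimalPrimes ↔ P ∈ J.minimalPrimes) ∧
    (P ∈ J.minimalPrimes ↔ ∃ i : Fin n, P ∈ (Ideal.span {x i} : Ideal R).minimalPrimes) := by
  subst hJ
  obtain ⟨i, hxi, hcP⟩ := IsPvMD.exists_not_colon_le R hR hP x hJ0
  have hxiJ : Ideal.span {x i} ≤ Ideal.span (Set.range x) :=
    Ideal.span_mono (Set.singleton_subset_iff.mpr ⟨i, rfl⟩)
  refine ⟨(Ideal.mem_minimalPrimes_iff_of_mul_le (le_vcl _)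
      ((colon_mul_vcl_le hxi _).trans hxiJ) hcP).symm, ⟨fun hPJ ↦ ⟨i, ?_⟩, ?_⟩⟩
  · exact (Ideal.mem_minimalPrimes_iff_of_mul_le hxiJ (Ideal.colon_mul_le _ _) hcP).mpr hPJ
  · rintro ⟨j, hPj⟩
    exact Ideal.mem_minimalPrimes_of_le_of_le
      (Ideal.span_mono (Set.singleton_subset_iff.mpr ⟨j, rfl⟩)) hPj hJP

end Paper
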